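/- arXiv:0810.3799 — 2 statements merged into one kernel-verified Lean document; each statement's English description precedes it below -/
import Mathlib

section
/- Suppose σ ∈ ℂ, R > 0, Pr > 0, k > 0, ν : [-1/2,1/2] → ℝ smooth and positive, and Θ, W are complex-valued smooth functions on [-1/2,1/2], not both identically zero, satisfying: (i) σ Θ = Θ'' − k² Θ + W with Θ(±1/2) = 0; (ii) (σ/Pr)(W'' − k² W) = −R k² Θ − k² P W + (P(W'))' + k² ν'' W, with W(±1/2) = W'(-1/2) = W''(1/2) = 0, where P f = (ν f')' − k² ν f. Then σ is real. -/
open Real intervalIntegral MeasureTheory Set ComplexConjugate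
open scoped ContDiff

local notation "conj'" => starRingEnd ℂ

lemma ibp_cx (a b : ℝ) (u v u' v' : ℝ → ℂ)
    (hu : ∀ x, HasDerivAt u (u' x) x) (hv : ∀ x, HasDerivAt v (v' x) x)
    (hu' : Continuous u') (hv' : Continuous v') :
    ∫ x in a..b, u' x * v x = u b * v b - u a * v a - ∫ x in a..b, u x * v' x := by
  have hcu : Continuous u := continuous_iff_continuousAt.2 fun x => (hu x).continuousAt
  have hcv : Continuous v := continuous_iff_continuousAt.2 fun x => (hv x).continuousAt
  have h := integral_deriv_mul_eq_sub (a := a) (b := b) (fun x _ => hu x) (fun x _ => hv x)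
    (hu'.intervalIntegrable _ _) (hv'.intervalIntegrable _ _)
  rw [integral_add (f := fun x => u' x * v x) (g := fun x => u x * v' x) ((hu'.mul hcv).intervalIntegrable _ _)
    ((hcu.mul hv').intervalIntegrable _ _)] at h
  rw [← h]; ring

lemma pos_int {f : ℝ → ℝ} {a b z₀ : ℝ} (hf : Continuous f) (hnn : ∀ x, 0 ≤ f x)
    (hab : a < b) (hz : z₀ ∈ Set.Icc a b) (hfz : 0 < f z₀) :
    0 < ∫ x in a..b, f x := by
  have hopen : IsOpen (f ⁻¹' Set.Ioi 0) := isOpen_Ioi.preimage hf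
  obtain ⟨δ, hδ, hball⟩ := Metric.isOpen_iff.1 hopen z₀ hfz
  set c := max a (z₀ - δ/2)
  set d := min b (z₀ + δ/2)
  have hcd : c < d := by
    simp only [c, d, lt_min_iff, max_lt_iff]
    obtain ⟨h1, h2⟩ := hz
    exact ⟨⟨hab, by linarith⟩, by linarith, by linarith⟩
  have hsub : Set.Ioo c d ⊆ f ⁻¹' Set.Ioi 0 := by
    intro x hx
    apply hball
    rw [Real.ball_eq_Ioo]
    constructor
    · calc z₀ - δ < z₀ - δ/2 := by linarith
        _ ≤ c := le_max_right _ _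
        _ < x := hx.1
    · calc x < d := hx.2
        _ ≤ z₀ + δ/2 := min_le_right _ _
        _ < z₀ + δ := by linarith
  have h1 : 0 < ∫ x in c..d, f x :=
    intervalIntegral_pos_of_pos_on (hf.intervalIntegrable _ _)
      (fun x hx => hsub hx) hcd
  have h2 : (∫ x in c..d, f x) ≤ ∫ x in a..b, f x := by
    apply integral_mono_interval (le_max_left _ _) hcd.le (min_le_left _ _)
    · filter_upwards with x using hnn x
    · exact hf.intervalIntegrable _ _
  linarith

set_option maxHeartbeats 1000000 in
lemma key (σ : ℂ) (R Pr k : ℝ) (hR : 0 < R) (hPr : 0 < Pr) (hk : 0 < k)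
    (a b : ℝ) (hab : a < b)
    (ν : ℝ → ℝ) (hν : ContDiff ℝ ∞ ν)
    (Θ W : ℝ → ℂ) (hΘ : ContDiff ℝ ∞ Θ) (hW : ContDiff ℝ ∞ W)
    (hnt : ∃ z ∈ Set.Icc a b, Θ z ≠ 0 ∨ W z ≠ 0)
    (heat : ∀ z, σ * Θ z = deriv (deriv Θ) z - (k : ℂ) ^ 2 * Θ z + W z)
    (hΘa : Θ a = 0) (hΘb : Θ b = 0)
    (mom : ∀ z, (σ / (Pr : ℂ)) * (deriv (deriv W) z - (k : ℂ) ^ 2 * W z) =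
        -((R : ℂ) * (k : ℂ) ^ 2) * Θ z
          - (k : ℂ) ^ 2 * (deriv (fun t => (ν t : ℂ) * deriv W t) z
              - (k : ℂ) ^ 2 * (ν z : ℂ) * W z)
          + deriv (fun z => deriv (fun t => (ν t : ℂ) * deriv (deriv W) t) z
              - (k : ℂ) ^ 2 * (ν z : ℂ) * deriv W z) z
          + (k : ℂ) ^ 2 * ((deriv (deriv ν) z : ℝ) : ℂ) * W z)
    (hWa : W a = 0) (hWb : W b = 0)
    (hWa' : deriv W a = 0) (hWb'' : deriv (deriv W) b = 0) :
    σ.im = 0 := by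
  -- abbreviations for derivatives
  set Θ' := deriv Θ with hΘ'def
  set Θ'' := deriv Θ' with hΘ''def
  set W' := deriv W with hW'def
  set W'' := deriv W' with hW''def
  -- smoothness bookkeeping
  have hΘd : ContDiff ℝ ∞ Θ' := (contDiff_infty_iff_deriv.mp hΘ).2
  have hWd : ContDiff ℝ ∞ W' := (contDiff_infty_iff_deriv.mp hW).2
  have hWdd : ContDiff ℝ ∞ W'' := (contDiff_infty_iff_deriv.mp hWd).2
  have dΘ : Differentiable ℝ Θ := (contDiff_infty_iff_deriv.mp hΘ).1
  have dΘd : Differentiable ℝ Θ' := (contDiff_infty_iff_deriv.mp hΘd).1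
  have dW : Differentiable ℝ W := (contDiff_infty_iff_deriv.mp hW).1
  have dWd : Differentiable ℝ W' := (contDiff_infty_iff_deriv.mp hWd).1
  have dWdd : Differentiable ℝ W'' := (contDiff_infty_iff_deriv.mp hWdd).1
  have hνC : ContDiff ℝ ∞ (fun t => ((ν t : ℝ) : ℂ)) :=
    Complex.ofRealCLM.contDiff.comp hν
  have hg1 : ContDiff ℝ ∞ (fun t => ((ν t : ℝ) : ℂ) * W' t) := hνC.mul hWd
  have hg2 : ContDiff ℝ ∞ (fun t => ((ν t : ℝ) : ℂ) * W'' t) := hνC.mul hWdd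
  have dg1 : Differentiable ℝ (fun t => ((ν t : ℝ) : ℂ) * W' t) :=
    (contDiff_infty_iff_deriv.mp hg1).1
  have dg2 : Differentiable ℝ (fun t => ((ν t : ℝ) : ℂ) * W'' t) :=
    (contDiff_infty_iff_deriv.mp hg2).1
  have cdg1 : Continuous (deriv (fun t => ((ν t : ℝ) : ℂ) * W' t)) :=
    ((contDiff_infty_iff_deriv.mp hg1).2).continuous
  have cdg2 : Continuous (deriv (fun t => ((ν t : ℝ) : ℂ) * W'' t)) :=
    ((contDiff_infty_iff_deriv.mp hg2).2).continuous
  set q := fun z => deriv (fun t => ((ν t : ℝ) : ℂ) * W'' t) z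
      - (k : ℂ) ^ 2 * ((ν z : ℝ) : ℂ) * W' z with hqdef
  have hq : ContDiff ℝ ∞ q :=
    ((contDiff_infty_iff_deriv.mp hg2).2).sub ((contDiff_const.mul hνC).mul hWd)
  have dq : Differentiable ℝ q := (contDiff_infty_iff_deriv.mp hq).1
  have cdq : Continuous (deriv q) := ((contDiff_infty_iff_deriv.mp hq).2).continuous
  -- continuity bookkeeping
  have cΘ : Continuous Θ := hΘ.continuous
  have cΘd : Continuous Θ' := hΘd.continuous
  have cΘdd : Continuous Θ'' := ((contDiff_infty_iff_deriv.mp hΘd).2).continuous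
  have cW : Continuous W := hW.continuous
  have cWd : Continuous W' := hWd.continuous
  have cWdd : Continuous W'' := hWdd.continuous
  have cν : Continuous (fun t => ((ν t : ℝ) : ℂ)) := hνC.continuous
  have cq : Continuous q := hq.continuous
  -- conj facts
  have conjD : ∀ (f : ℝ → ℂ), Differentiable ℝ f →
      ∀ x, HasDerivAt (fun y => conj' (f y)) (conj' (deriv f x)) x := by
    intro f hf x
    simp only [starRingEnd_apply]
    exact ((hf x).hasDerivAt).star
  have conjC : ∀ (f : ℝ → ℂ), Continuous f → Continuous (fun y => conj' (f y)) := by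
    intro f hf
    exact (Complex.continuous_conj).comp hf
  -- derivative facts
  have hdΘd : ∀ x, HasDerivAt Θ' (Θ'' x) x := fun x => (dΘd x).hasDerivAt
  have hdWd : ∀ x, HasDerivAt W' (W'' x) x := fun x => (dWd x).hasDerivAt
  have hdW : ∀ x, HasDerivAt W (W' x) x := fun x => (dW x).hasDerivAt
  have hdΘ : ∀ x, HasDerivAt Θ (Θ' x) x := fun x => (dΘ x).hasDerivAt
  -- real-valued integrals
  set nΘ : ℝ := ∫ x in a..b, Complex.normSq (Θ x) with hnΘ
  set nΘ' : ℝ := ∫ x in a..b, Complex.normSq (Θ' x) with hnΘ'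
  set nW : ℝ := ∫ x in a..b, Complex.normSq (W x) with hnW
  set nW' : ℝ := ∫ x in a..b, Complex.normSq (W' x) with hnW'
  -- conversions to real integrals
  have convΘ : (∫ x in a..b, Θ x * conj' (Θ x)) = (nΘ : ℂ) := by
    rw [hnΘ, ← intervalIntegral.integral_ofReal]
    exact integral_congr fun x _ => Complex.mul_conj _
  have convΘ' : (∫ x in a..b, Θ' x * conj' (Θ' x)) = (nΘ' : ℂ) := by
    rw [hnΘ', ← intervalIntegral.integral_ofReal]
    exact integral_congr fun x _ => Complex.mul_conj _
  have convW : (∫ x in a..b, W x * conj' (W x)) = (nW : ℂ) := by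
    rw [hnW, ← intervalIntegral.integral_ofReal]
    exact integral_congr fun x _ => Complex.mul_conj _
  have convW' : (∫ x in a..b, W' x * conj' (W' x)) = (nW' : ℂ) := by
    rw [hnW', ← intervalIntegral.integral_ofReal]
    exact integral_congr fun x _ => Complex.mul_conj _
  -- IBP for the heat equation
  have I1 : (∫ x in a..b, Θ'' x * conj' (Θ x))
      = -∫ x in a..b, Θ' x * conj' (Θ' x) := by
    have h := ibp_cx a b Θ' (fun y => conj' (Θ y)) Θ'' (fun y => conj' (Θ' y))
      hdΘd (conjD Θ dΘ) cΘdd (conjC Θ' cΘd)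
    simpa [hΘa, hΘb] using h
  -- integrated heat equation
  have EH : σ * (nΘ : ℂ) = -(nΘ' : ℂ) - (k : ℂ) ^ 2 * (nΘ : ℂ)
      + ∫ x in a..b, W x * conj' (Θ x) := by
    have e1 : σ * (nΘ : ℂ) = ∫ x in a..b, σ * (Θ x * conj' (Θ x)) := by
      rw [intervalIntegral.integral_const_mul, convΘ]
    have e2 : (∫ x in a..b, σ * (Θ x * conj' (Θ x)))
        = ∫ x in a..b, (Θ'' x * conj' (Θ x) - (k : ℂ) ^ 2 * (Θ x * conj' (Θ x))
            + W x * conj' (Θ x)) := by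
      refine integral_congr fun x _ => ?_
      rw [show σ * (Θ x * conj' (Θ x)) = (σ * Θ x) * conj' (Θ x) from by ring, heat x]
      ring
    have e3 : (∫ x in a..b, (Θ'' x * conj' (Θ x) - (k : ℂ) ^ 2 * (Θ x * conj' (Θ x))
            + W x * conj' (Θ x)))
        = (∫ x in a..b, Θ'' x * conj' (Θ x))
          - (k : ℂ) ^ 2 * (∫ x in a..b, Θ x * conj' (Θ x))
          + ∫ x in a..b, W x * conj' (Θ x) := by
      rw [integral_add (f := fun x => Θ'' x * conj' (Θ x) - (k : ℂ) ^ 2 * (Θ x * conj' (Θ x)))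
          (g := fun x => W x * conj' (Θ x)) (((cΘdd.mul (conjC Θ cΘ)).intervalIntegrable _ _).sub
          ((continuous_const.mul (cΘ.mul (conjC Θ cΘ))).intervalIntegrable _ _))
          ((cW.mul (conjC Θ cΘ)).intervalIntegrable _ _),
        integral_sub (f := fun x => Θ'' x * conj' (Θ x))
          (g := fun x => (k : ℂ) ^ 2 * (Θ x * conj' (Θ x))) ((cΘdd.mul (conjC Θ cΘ)).intervalIntegrable _ _)
          ((continuous_const.mul (cΘ.mul (conjC Θ cΘ))).intervalIntegrable _ _),
        intervalIntegral.integral_const_mul]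
    rw [e1, e2, e3, I1, convΘ', convΘ]
  -- imaginary part of the heat identity
  have hCim : (∫ x in a..b, W x * conj' (Θ x)).im = σ.im * nΘ := by
    have h := congrArg Complex.im EH
    simp only [Complex.mul_im, Complex.ofReal_re, Complex.ofReal_im, Complex.add_im,
      Complex.sub_im, Complex.neg_im, pow_two, Complex.mul_re, mul_zero, zero_mul,
      add_zero, zero_add, sub_zero, zero_sub, neg_zero, neg_neg, mul_neg] at h
    linarith [h]
  -- weighted real integrals
  set j1 : ℝ := ∫ x in a..b, ν x * Complex.normSq (W' x) with hj1
  set j2 : ℝ := ∫ x in a..b, ν x * Complex.normSq (W x) with hj2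
  set j3 : ℝ := ∫ x in a..b, ν x * Complex.normSq (W'' x) with hj3
  set j4 : ℝ := ∫ x in a..b, deriv (deriv ν) x * Complex.normSq (W x) with hj4
  have convj1 : (∫ x in a..b, ((ν x : ℝ) : ℂ) * W' x * conj' (W' x)) = (j1 : ℂ) := by
    rw [hj1, ← intervalIntegral.integral_ofReal]
    refine integral_congr fun x _ => ?_
    rw [mul_assoc, Complex.mul_conj, ← Complex.ofReal_mul]
  have convj2 : (∫ x in a..b, ((ν x : ℝ) : ℂ) * W x * conj' (W x)) = (j2 : ℂ) := by
    rw [hj2, ← intervalIntegral.integral_ofReal]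
    refine integral_congr fun x _ => ?_
    rw [mul_assoc, Complex.mul_conj, ← Complex.ofReal_mul]
  have convj3 : (∫ x in a..b, ((ν x : ℝ) : ℂ) * W'' x * conj' (W'' x)) = (j3 : ℂ) := by
    rw [hj3, ← intervalIntegral.integral_ofReal]
    refine integral_congr fun x _ => ?_
    rw [mul_assoc, Complex.mul_conj, ← Complex.ofReal_mul]
  have cνdd : Continuous (fun x => ((deriv (deriv ν) x : ℝ) : ℂ)) :=
    Complex.continuous_ofReal.comp
      ((contDiff_infty_iff_deriv.mp (contDiff_infty_iff_deriv.mp hν).2).2).continuous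
  have convj4 : (∫ x in a..b, ((deriv (deriv ν) x : ℝ) : ℂ) * W x * conj' (W x)) = (j4 : ℂ) := by
    rw [hj4, ← intervalIntegral.integral_ofReal]
    refine integral_congr fun x _ => ?_
    rw [mul_assoc, Complex.mul_conj, ← Complex.ofReal_mul]
  -- IBP identities for the momentum equation
  have I2 : (∫ x in a..b, W'' x * conj' (W x))
      = -∫ x in a..b, W' x * conj' (W' x) := by
    have h := ibp_cx a b W' (fun y => conj' (W y)) W'' (fun y => conj' (W' y))
      hdWd (conjD W dW) cWdd (conjC W' cWd)
    simpa [hWa, hWb] using h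
  have I3 : (∫ x in a..b, deriv (fun t => ((ν t : ℝ) : ℂ) * W' t) x * conj' (W x))
      = -∫ x in a..b, ((ν x : ℝ) : ℂ) * W' x * conj' (W' x) := by
    have h := ibp_cx a b (fun t => ((ν t : ℝ) : ℂ) * W' t) (fun y => conj' (W y))
      (deriv (fun t => ((ν t : ℝ) : ℂ) * W' t)) (fun y => conj' (W' y))
      (fun x => (dg1 x).hasDerivAt) (conjD W dW) cdg1 (conjC W' cWd)
    simpa [hWa, hWb] using h
  have I4 : (∫ x in a..b, deriv q x * conj' (W x))
      = -∫ x in a..b, q x * conj' (W' x) := by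
    have h := ibp_cx a b q (fun y => conj' (W y)) (deriv q) (fun y => conj' (W' y))
      (fun x => (dq x).hasDerivAt) (conjD W dW) cdq (conjC W' cWd)
    simpa [hWa, hWb] using h
  have I5 : (∫ x in a..b, deriv (fun t => ((ν t : ℝ) : ℂ) * W'' t) x * conj' (W' x))
      = -∫ x in a..b, ((ν x : ℝ) : ℂ) * W'' x * conj' (W'' x) := by
    have h := ibp_cx a b (fun t => ((ν t : ℝ) : ℂ) * W'' t) (fun y => conj' (W' y))
      (deriv (fun t => ((ν t : ℝ) : ℂ) * W'' t)) (fun y => conj' (W'' y))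
      (fun x => (dg2 x).hasDerivAt) (conjD W' dWd) cdg2 (conjC W'' cWdd)
    simpa [hWa', hWb''] using h
  have I6 : (∫ x in a..b, q x * conj' (W' x))
      = -(j3 : ℂ) - (k : ℂ) ^ 2 * (j1 : ℂ) := by
    have e : (∫ x in a..b, q x * conj' (W' x))
        = ∫ x in a..b, (deriv (fun t => ((ν t : ℝ) : ℂ) * W'' t) x * conj' (W' x)
            - (k : ℂ) ^ 2 * (((ν x : ℝ) : ℂ) * W' x * conj' (W' x))) := by
      refine integral_congr fun x _ => ?_
      rw [hqdef]; ring
    rw [e, integral_sub (f := fun x => deriv (fun t => ((ν t : ℝ) : ℂ) * W'' t) x * conj' (W' x))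
        (g := fun x => (k : ℂ) ^ 2 * (((ν x : ℝ) : ℂ) * W' x * conj' (W' x))) ((cdg2.mul (conjC W' cWd)).intervalIntegrable _ _)
        ((continuous_const.mul ((cν.mul cWd).mul (conjC W' cWd))).intervalIntegrable _ _),
      intervalIntegral.integral_const_mul, I5, convj3, convj1]
  -- integrated momentum equation
  have EM0 : (σ / (Pr : ℂ)) * (-(nW' : ℂ) - (k : ℂ) ^ 2 * (nW : ℂ))
      = -((R : ℂ) * (k : ℂ) ^ 2) * (∫ x in a..b, Θ x * conj' (W x))
        - (k : ℂ) ^ 2 * (-(j1 : ℂ) - (k : ℂ) ^ 2 * (j2 : ℂ))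
        + (-(-(j3 : ℂ) - (k : ℂ) ^ 2 * (j1 : ℂ)))
        + (k : ℂ) ^ 2 * (j4 : ℂ) := by
    have e1 : (σ / (Pr : ℂ)) * (-(nW' : ℂ) - (k : ℂ) ^ 2 * (nW : ℂ))
        = ∫ x in a..b, (σ / (Pr : ℂ)) * ((W'' x - (k : ℂ) ^ 2 * W x) * conj' (W x)) := by
      rw [intervalIntegral.integral_const_mul]
      congr 1
      have e1a : (∫ x in a..b, (W'' x - (k : ℂ) ^ 2 * W x) * conj' (W x))
          = ∫ x in a..b, (W'' x * conj' (W x) - (k : ℂ) ^ 2 * (W x * conj' (W x))) :=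
        integral_congr fun x _ => by ring
      rw [e1a, integral_sub (f := fun x => W'' x * conj' (W x))
          (g := fun x => (k : ℂ) ^ 2 * (W x * conj' (W x))) ((cWdd.mul (conjC W cW)).intervalIntegrable _ _)
          ((continuous_const.mul (cW.mul (conjC W cW))).intervalIntegrable _ _),
        intervalIntegral.integral_const_mul, I2, convW', convW]
    have e2 : (∫ x in a..b, (σ / (Pr : ℂ)) * ((W'' x - (k : ℂ) ^ 2 * W x) * conj' (W x)))
        = ∫ x in a..b,
            (((-((R : ℂ) * (k : ℂ) ^ 2) * (Θ x * conj' (W x))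
              - (k : ℂ) ^ 2 * (deriv (fun t => ((ν t : ℝ) : ℂ) * W' t) x * conj' (W x)))
              + (k : ℂ) ^ 2 * ((k : ℂ) ^ 2 * (((ν x : ℝ) : ℂ) * W x * conj' (W x))))
              + deriv q x * conj' (W x))
              + (k : ℂ) ^ 2 * (((deriv (deriv ν) x : ℝ) : ℂ) * W x * conj' (W x)) := by
      refine integral_congr fun x _ => ?_
      rw [show (σ / (Pr : ℂ)) * ((W'' x - (k : ℂ) ^ 2 * W x) * conj' (W x))
          = ((σ / (Pr : ℂ)) * (W'' x - (k : ℂ) ^ 2 * W x)) * conj' (W x) from by ring,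
        mom x]
      ring
    have iA : IntervalIntegrable (fun x => -((R : ℂ) * (k : ℂ) ^ 2) * (Θ x * conj' (W x)))
        MeasureTheory.volume a b :=
      (continuous_const.mul (cΘ.mul (conjC W cW))).intervalIntegrable _ _
    have iB : IntervalIntegrable (fun x => (k : ℂ) ^ 2
        * (deriv (fun t => ((ν t : ℝ) : ℂ) * W' t) x * conj' (W x))) MeasureTheory.volume a b :=
      (continuous_const.mul (cdg1.mul (conjC W cW))).intervalIntegrable _ _
    have iC : IntervalIntegrable (fun x => (k : ℂ) ^ 2
        * ((k : ℂ) ^ 2 * (((ν x : ℝ) : ℂ) * W x * conj' (W x)))) MeasureTheory.volume a b :=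
      (continuous_const.mul (continuous_const.mul
        ((cν.mul cW).mul (conjC W cW)))).intervalIntegrable _ _
    have iD : IntervalIntegrable (fun x => deriv q x * conj' (W x)) MeasureTheory.volume a b :=
      (cdq.mul (conjC W cW)).intervalIntegrable _ _
    have iE : IntervalIntegrable (fun x => (k : ℂ) ^ 2
        * (((deriv (deriv ν) x : ℝ) : ℂ) * W x * conj' (W x))) MeasureTheory.volume a b :=
      (continuous_const.mul ((cνdd.mul cW).mul (conjC W cW))).intervalIntegrable _ _
    rw [e1, e2, integral_add (((iA.sub iB).add iC).add iD) iE,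
      integral_add ((iA.sub iB).add iC) iD, integral_add (iA.sub iB) iC,
      integral_sub iA iB, intervalIntegral.integral_const_mul, intervalIntegral.integral_const_mul, intervalIntegral.integral_const_mul,
      intervalIntegral.integral_const_mul, intervalIntegral.integral_const_mul, I4, I6, I3, convj1, convj2, convj4]
    ring
  -- relation between the two cross terms
  have hDim : (∫ x in a..b, Θ x * conj' (W x)).im = -(σ.im * nΘ) := by
    have hsum : (∫ x in a..b, Θ x * conj' (W x)) + (∫ x in a..b, W x * conj' (Θ x))
        = ((∫ x in a..b, 2 * (Θ x * conj' (W x)).re : ℝ) : ℂ) := by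
      rw [← integral_add (f := fun x => Θ x * conj' (W x)) (g := fun x => W x * conj' (Θ x))
          ((cΘ.mul (conjC W cW)).intervalIntegrable _ _)
          ((cW.mul (conjC Θ cΘ)).intervalIntegrable _ _),
        ← intervalIntegral.integral_ofReal]
      refine integral_congr fun x _ => ?_
      rw [show W x * conj' (Θ x) = conj' (Θ x * conj' (W x)) from by
          rw [map_mul, Complex.conj_conj]; ring,
        Complex.add_conj]
    have h := congrArg Complex.im hsum
    simp only [Complex.add_im, Complex.ofReal_im] at h
    rw [hCim] at h
    linarith
  -- take the imaginary part of the momentum identity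
  rw [div_eq_mul_inv, ← Complex.ofReal_inv] at EM0
  have hM := congrArg Complex.im EM0
  simp only [Complex.mul_im, Complex.mul_re, Complex.add_im, Complex.add_re, Complex.sub_im,
    Complex.sub_re, Complex.neg_im, Complex.neg_re, Complex.ofReal_re, Complex.ofReal_im,
    pow_two, mul_zero, zero_mul, add_zero, zero_add, sub_zero, zero_sub, neg_zero, neg_neg,
    mul_neg, neg_mul, hDim] at hM
  -- nonnegativity
  have hnΘ0 : 0 ≤ nΘ := integral_nonneg hab.le fun x _ => Complex.normSq_nonneg _
  have hnW0 : 0 ≤ nW := integral_nonneg hab.le fun x _ => Complex.normSq_nonneg _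
  have hnW'0 : 0 ≤ nW' := integral_nonneg hab.le fun x _ => Complex.normSq_nonneg _
  by_contra hσ
  have hprod : σ.im * (Pr⁻¹ * (nW' + k * k * nW) + R * (k * k) * nΘ) = 0 := by
    linear_combination -hM
  have key0 : Pr⁻¹ * (nW' + k * k * nW) + R * (k * k) * nΘ = 0 :=
    (mul_eq_zero.mp hprod).resolve_left hσ
  have hPr' : 0 < Pr⁻¹ := inv_pos.2 hPr
  have hk2 : 0 < k * k := mul_pos hk hk
  have hsum0 : 0 ≤ nW' + k * k * nW := by nlinarith
  have t1 : 0 ≤ Pr⁻¹ * (nW' + k * k * nW) := mul_nonneg hPr'.le hsum0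
  have hRk : 0 < R * (k * k) := mul_pos hR hk2
  have t2 : 0 ≤ R * (k * k) * nΘ := mul_nonneg hRk.le hnΘ0
  have hΘzero : nΘ = 0 := by
    have h2 : R * (k * k) * nΘ = 0 := by linarith
    rcases mul_eq_zero.mp h2 with h | h
    · exact absurd h hRk.ne'
    · exact h
  have hWzero : nW = 0 := by
    have h1 : Pr⁻¹ * (nW' + k * k * nW) = 0 := by linarith
    rcases mul_eq_zero.mp h1 with h | h
    · exact absurd h hPr'.ne'
    · nlinarith
  rw [hnΘ] at hΘzero
  rw [hnW] at hWzero
  obtain ⟨z, hz, hor⟩ := hnt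
  rcases hor with h | h
  · have hpos : 0 < ∫ x in a..b, Complex.normSq (Θ x) :=
      pos_int (Complex.continuous_normSq.comp cΘ) (fun x => Complex.normSq_nonneg _)
        hab hz (Complex.normSq_pos.2 h)
    linarith
  · have hpos : 0 < ∫ x in a..b, Complex.normSq (W x) :=
      pos_int (Complex.continuous_normSq.comp cW) (fun x => Complex.normSq_nonneg _)
        hab hz (Complex.normSq_pos.2 h)
    linarith

/-- Eigenvalues of the linearized convection problem with temperature-dependent
viscosity are real. -/
theorem eigenvalues_real (σ : ℂ) (R Pr k : ℝ) (hR : 0 < R) (hPr : 0 < Pr) (hk : 0 < k)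
    (ν : ℝ → ℝ) (hν : ContDiff ℝ (⊤ : ℕ∞) ν)
    (hνpos : ∀ z ∈ Set.Icc (-(1/2) : ℝ) (1/2), 0 < ν z)
    (Θ W : ℝ → ℂ) (hΘ : ContDiff ℝ (⊤ : ℕ∞) Θ) (hW : ContDiff ℝ (⊤ : ℕ∞) W)
    (hnt : ∃ z ∈ Set.Icc (-(1/2) : ℝ) (1/2), Θ z ≠ 0 ∨ W z ≠ 0)
    (P : (ℝ → ℂ) → ℝ → ℂ)
    (hP : ∀ g z, P g z = deriv (fun t => (ν t : ℂ) * deriv g t) z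
        - (k : ℂ) ^ 2 * (ν z : ℂ) * g z)
    (heat : ∀ z, σ * Θ z = deriv (deriv Θ) z - (k : ℂ) ^ 2 * Θ z + W z)
    (hΘ0 : Θ (-(1/2)) = 0) (hΘ1 : Θ (1/2) = 0)
    (mom : ∀ z, (σ / (Pr : ℂ)) * (deriv (deriv W) z - (k : ℂ) ^ 2 * W z) =
        -((R : ℂ) * (k : ℂ) ^ 2) * Θ z - (k : ℂ) ^ 2 * P W z
          + deriv (P (deriv W)) z + (k : ℂ) ^ 2 * ((deriv (deriv ν) z : ℝ) : ℂ) * W z)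
    (hW0 : W (-(1/2)) = 0) (hW1 : W (1/2) = 0)
    (hW0' : deriv W (-(1/2)) = 0) (hW1'' : deriv (deriv W) (1/2) = 0) :
    σ.im = 0 := by
  have hPd : P (deriv W) = fun z => deriv (fun t => ((ν t : ℝ) : ℂ) * deriv (deriv W) t) z
      - (k : ℂ) ^ 2 * ((ν z : ℝ) : ℂ) * deriv W z := funext fun z => hP _ z
  rw [hPd] at mom
  simp only [hP] at mom
  exact key σ R Pr k hR hPr hk (-(1/2)) (1/2) (by norm_num) ν (hν.of_le (by simp))
    Θ W (hΘ.of_le (by simp)) (hW.of_le (by simp)) hnt heat hΘ0 hΘ1 mom hW0 hW1 hW0' hW1''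
end

section
/- Consider the linear ODE system d_h X = A(z) X on [-1/2, 1/2] where X = (W₀,W₁,W₂,W₃,Θ₀,Θ₁) and A(z) is the 6×6 matrix with rows (0,1,0,0,0,0), (0,0,1/ν,0,0,0), (0,2ν,0,1,0,0), (−(σ̂/Pr + ν + d_h²ν),0,σ̂/(νPr),0,R̃,0), (0,0,0,0,0,1), (−1,0,0,0,1+σ̂,0), with ν continuous and positive. A solution satisfying the two-point boundary conditions W₀(±1/2)=0, W₁(−1/2)=0, W₂(1/2)=0, Θ₀(±1/2)=0 exists and is nontrivial if and only if the 3×3 matrix M(R̃,k), whose columns are the values (Wi₀(1/2), Wi₂(1/2), Θi₀(1/2)) of the three solutions with initial data (A,B,C) = (1,0,0),(0,1,0),(0,0,1) prescribed via W₂(−1/2)=ν(−1/2)A/k, W₃(−1/2)=B/k, Θ₁(−1/2)=C/k (and W₀(−1/2)=W₁(−1/2)=Θ₀(−1/2)=0), is singular, i.e., det M(R̃,k) = 0. -/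
open Real Matrix Set

private lemma vec6_five {α : Type*} (a b c d e f : α) :
    (![a, b, c, d, e, f] : Fin 6 → α) 5 = f := rfl

/-- Uniqueness for the linear ODE `X' = k • A(z) *ᵥ X` with continuous `A`. -/
lemma ode_uniq6 {k : ℝ} {A : ℝ → Matrix (Fin 6) (Fin 6) ℝ} (hAc : Continuous A)
    {X Y : ℝ → Fin 6 → ℝ}
    (hX : ∀ z i, HasDerivAt (fun t => X t i) (k * ((A z).mulVec (X z)) i) z)
    (hY : ∀ z i, HasDerivAt (fun t => Y t i) (k * ((A z).mulVec (Y z)) i) z)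
    {t₀ : ℝ} (h0 : X t₀ = Y t₀) : ∀ t, X t = Y t := by
  -- package derivatives as Pi-valued
  have hXp : ∀ z, HasDerivAt X (k • ((A z).mulVec (X z))) z := fun z =>
    hasDerivAt_pi.mpr (fun i => hX z i)
  have hYp : ∀ z, HasDerivAt Y (k • ((A z).mulVec (Y z))) z := fun z =>
    hasDerivAt_pi.mpr (fun i => hY z i)
  -- the linear map from matrices to continuous linear maps
  let ψ : Matrix (Fin 6) (Fin 6) ℝ →ₗ[ℝ] ((Fin 6 → ℝ) →L[ℝ] (Fin 6 → ℝ)) :=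
    (LinearMap.toContinuousLinearMap.toLinearMap).comp Matrix.toLin'.toLinearMap
  have hψ : Continuous ψ := ψ.continuous_of_finiteDimensional
  have hψap : ∀ M x, ψ M x = M.mulVec x := by
    intro M x
    simp [ψ, Matrix.toLin'_apply]
  intro t
  set a : ℝ := min t₀ t - 1 with ha
  set b : ℝ := max t₀ t + 1 with hb
  have hab : a < b := by
    have h1 : min t₀ t ≤ max t₀ t := le_trans (min_le_left _ _) (le_max_left _ _)
    simp only [ha, hb]; linarith
  have ht0 : t₀ ∈ Ioo a b := by
    constructor
    · have := min_le_left t₀ t; simp only [ha]; linarith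
    · have := le_max_left t₀ t; simp only [hb]; linarith
  have htm : t ∈ Icc a b := by
    constructor
    · have := min_le_right t₀ t; simp only [ha]; linarith
    · have := le_max_right t₀ t; simp only [hb]; linarith
  -- clamp
  set c : ℝ → ℝ := fun s => max a (min b s) with hc
  have hcmem : ∀ s, c s ∈ Icc a b := fun s =>
    ⟨le_max_left _ _, max_le hab.le (min_le_left _ _)⟩
  have hceq : ∀ s ∈ Icc a b, c s = s := by
    intro s hs
    simp only [hc]
    rw [min_eq_right hs.2, max_eq_right hs.1]
  set v : ℝ → (Fin 6 → ℝ) → (Fin 6 → ℝ) := fun s x => (k • ψ (A (c s))) x with hv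
  -- Lipschitz bound
  obtain ⟨C, hC⟩ := (isCompact_Icc (a := a) (b := b)).exists_bound_of_continuousOn
    (continuous_norm.comp (hψ.comp hAc)).continuousOn
  set K : NNReal := ⟨|k| * max C 0, by positivity⟩ with hK
  have hlip : ∀ s, LipschitzWith K (v s) := by
    intro s
    apply (k • ψ (A (c s))).lipschitz.weaken
    rw [← NNReal.coe_le_coe]
    show ‖k • ψ (A (c s))‖ ≤ |k| * max C 0
    have hns := norm_smul k (ψ (A (c s)))
    rw [hns, Real.norm_eq_abs]
    have hCc := hC _ (hcmem s)
    simp only [Function.comp_apply, norm_norm] at hCc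
    exact mul_le_mul_of_nonneg_left (le_trans hCc (le_max_left _ _)) (abs_nonneg k)
  have key : EqOn X Y (Icc a b) := by
    refine ODE_solution_unique_of_mem_Icc (s := fun _ => (univ : Set (Fin 6 → ℝ)))
      (fun s _ => (hlip s).lipschitzOnWith) ht0 ?_ ?_ (fun _ _ => trivial) ?_ ?_
      (fun _ _ => trivial) h0
    · exact fun s _ => (hXp s).continuousAt.continuousWithinAt
    · intro s hs
      have hcs := hceq s (Ioo_subset_Icc_self hs)
      have hvv : v s (X s) = k • ((A s).mulVec (X s)) := by
        simp only [hv, ContinuousLinearMap.smul_apply, hψap, hcs]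
      rw [hvv]; exact hXp s
    · exact fun s _ => (hYp s).continuousAt.continuousWithinAt
    · intro s hs
      have hcs := hceq s (Ioo_subset_Icc_self hs)
      have hvv : v s (Y s) = k • ((A s).mulVec (Y s)) := by
        simp only [hv, ContinuousLinearMap.smul_apply, hψap, hcs]
      rw [hvv]; exact hYp s
  exact key htm


/-- Shooting-method characterization of neutral stability: the two-point
boundary value problem for the 6×6 first-order system `d_h X = A(z) X` has a
nontrivial solution if and only if the 3×3 matrix `M(R̃,k)`, built from the
values at `z = 1/2` of the three fundamental solutions determined by the
initial data `(A,B,C) = (1,0,0), (0,1,0), (0,0,1)` at `z = -1/2`, is singular. -/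
theorem shooting_characterization (σ' R' k Pr : ℝ) (hk : 0 < k) (hPr : 0 < Pr)
    (ν : ℝ → ℝ) (hν : ContDiff ℝ (⊤ : ℕ∞) ν) (hνpos : ∀ z, 0 < ν z)
    (A : ℝ → Matrix (Fin 6) (Fin 6) ℝ)
    (hA : ∀ z, A z =
      !![0, 1, 0, 0, 0, 0;
         0, 0, 1 / ν z, 0, 0, 0;
         0, 2 * ν z, 0, 1, 0, 0;
         -(σ' / Pr + ν z + deriv (deriv ν) z / k ^ 2), 0, σ' / (ν z * Pr), 0, R', 0;
         0, 0, 0, 0, 0, 1;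
         -1, 0, 0, 0, 1 + σ', 0])
    (X1 X2 X3 : ℝ → Fin 6 → ℝ)
    (hX1 : ∀ z i, HasDerivAt (fun t => X1 t i) (k * ((A z).mulVec (X1 z)) i) z)
    (hX2 : ∀ z i, HasDerivAt (fun t => X2 t i) (k * ((A z).mulVec (X2 z)) i) z)
    (hX3 : ∀ z i, HasDerivAt (fun t => X3 t i) (k * ((A z).mulVec (X3 z)) i) z)
    (hX1i : X1 (-(1/2)) = ![0, 0, ν (-(1/2)) * 1 / k, 0, 0, 0])
    (hX2i : X2 (-(1/2)) = ![0, 0, 0, 1 / k, 0, 0])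
    (hX3i : X3 (-(1/2)) = ![0, 0, 0, 0, 0, 1 / k]) :
    (∃ X : ℝ → Fin 6 → ℝ,
        (∀ z i, HasDerivAt (fun t => X t i) (k * ((A z).mulVec (X z)) i) z) ∧
        X (-(1/2)) 0 = 0 ∧ X (-(1/2)) 1 = 0 ∧ X (-(1/2)) 4 = 0 ∧
        X (1/2) 0 = 0 ∧ X (1/2) 2 = 0 ∧ X (1/2) 4 = 0 ∧
        ∃ z, X z ≠ 0) ↔
      (!![X1 (1/2) 0, X2 (1/2) 0, X3 (1/2) 0;
          X1 (1/2) 2, X2 (1/2) 2, X3 (1/2) 2;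
          X1 (1/2) 4, X2 (1/2) 4, X3 (1/2) 4] : Matrix (Fin 3) (Fin 3) ℝ).det = 0 := by
  have hk0 : k ≠ 0 := ne_of_gt hk
  set q : ℝ := -(1/2) with hq
  have hν0 : ∀ z, ν z ≠ 0 := fun z => ne_of_gt (hνpos z)
  have hνc : Continuous ν := hν.continuous
  have hν'c : Continuous (deriv (deriv ν)) := by
    have h0 : ContDiff ℝ (⊤ : ℕ∞) ν := hν.of_le (mod_cast le_top)
    have h1 : ContDiff ℝ (⊤ : ℕ∞) (deriv ν) := (contDiff_infty_iff_deriv.mp h0).2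
    have h2 : ContDiff ℝ (⊤ : ℕ∞) (deriv (deriv ν)) := (contDiff_infty_iff_deriv.mp h1).2
    exact h2.continuous
  have hAc : Continuous A := by
    have hAfun : A = fun z => !![0, 1, 0, 0, 0, 0;
         0, 0, 1 / ν z, 0, 0, 0;
         0, 2 * ν z, 0, 1, 0, 0;
         -(σ' / Pr + ν z + deriv (deriv ν) z / k ^ 2), 0, σ' / (ν z * Pr), 0, R', 0;
         0, 0, 0, 0, 0, 1;
         -1, 0, 0, 0, 1 + σ', 0] := funext hA
    rw [hAfun]
    apply continuous_matrix
    intro i j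
    fin_cases i <;> fin_cases j <;> simp <;>
      first
        | exact continuous_const
        | exact continuous_const.div hνc hν0
        | exact continuous_const.div (hνc.mul continuous_const)
            (fun z => mul_ne_zero (hν0 z) (ne_of_gt hPr))
        | exact hνc.inv₀ hν0
        | fun_prop
  set S : ℝ → ℝ → ℝ → ℝ → Fin 6 → ℝ :=
    fun l m w z i => l * X1 z i + m * X2 z i + w * X3 z i with hSdef
  have hS : ∀ l m w z i,
      HasDerivAt (fun t => S l m w t i) (k * ((A z).mulVec (S l m w z)) i) z := by
    intro l m w z i
    have h := (((hX1 z i).const_mul l).add ((hX2 z i).const_mul m)).add ((hX3 z i).const_mul w)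
    refine h.congr_deriv ?_
    simp only [Matrix.mulVec, dotProduct, Fin.sum_univ_six, hSdef]
    ring
  have hzero : ∀ z i, HasDerivAt (fun _ : ℝ => (0 : Fin 6 → ℝ) i)
      (k * ((A z).mulVec (0 : Fin 6 → ℝ)) i) z := by
    intro z i
    simp only [Matrix.mulVec_zero, Pi.zero_apply, mul_zero]
    exact hasDerivAt_const _ _
  constructor
  · rintro ⟨X, hXd, h0a, h1a, h4a, h0b, h2b, h4b, z0, hz0⟩
    set l := k * X q 2 / ν q with hl
    set m := k * X q 3 with hm
    set w := k * X q 5 with hw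
    have heq : S l m w q = X q := by
      have c0 : S l m w q 0 = X q 0 := by simp [hSdef, hX1i, hX2i, hX3i, h0a]
      have c1 : S l m w q 1 = X q 1 := by simp [hSdef, hX1i, hX2i, hX3i, h1a]
      have c2 : S l m w q 2 = X q 2 := by
        simp [hSdef, hX1i, hX2i, hX3i, hl]
        field_simp [hν0 q]
      have c3 : S l m w q 3 = X q 3 := by
        simp [hSdef, hX1i, hX2i, hX3i, hm]
        field_simp
      have c4 : S l m w q 4 = X q 4 := by simp [hSdef, hX1i, hX2i, hX3i, h4a]
      have c5 : S l m w q 5 = X q 5 := by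
        simp [hSdef, hX1i, hX2i, hX3i, hw, vec6_five]
        field_simp
      ext i
      fin_cases i
      · exact c0
      · exact c1
      · exact c2
      · exact c3
      · exact c4
      · exact c5
    have hXS : ∀ t, S l m w t = X t := ode_uniq6 hAc (hS l m w) hXd heq
    rw [← Matrix.exists_mulVec_eq_zero_iff]
    refine ⟨![l, m, w], ?_, ?_⟩
    · intro hv
      have hl0 : l = 0 := congrFun hv 0
      have hm0 : m = 0 := congrFun hv 1
      have hw0 : w = 0 := congrFun hv 2
      have hX0 : X q = 0 := by
        rw [← heq]
        ext i
        fin_cases i <;> simp [hSdef, hl0, hm0, hw0]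
      have hXz : ∀ t, X t = (fun _ : ℝ => (0 : Fin 6 → ℝ)) t :=
        ode_uniq6 hAc hXd hzero hX0
      exact hz0 (hXz z0)
    · have r0 : X1 (1/2) 0 * l + X2 (1/2) 0 * m + X3 (1/2) 0 * w = 0 := by
        have h' := congrFun (hXS (1/2)) 0
        simp only [hSdef] at h'
        rw [h0b] at h'
        linarith
      have r1 : X1 (1/2) 2 * l + X2 (1/2) 2 * m + X3 (1/2) 2 * w = 0 := by
        have h' := congrFun (hXS (1/2)) 2
        simp only [hSdef] at h'
        rw [h2b] at h'
        linarith
      have r2 : X1 (1/2) 4 * l + X2 (1/2) 4 * m + X3 (1/2) 4 * w = 0 := by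
        have h' := congrFun (hXS (1/2)) 4
        simp only [hSdef] at h'
        rw [h4b] at h'
        linarith
      ext i
      fin_cases i <;>
        simp [Matrix.mulVec, dotProduct, Fin.sum_univ_three] <;>
        linarith [r0, r1, r2]
  · intro hdet
    obtain ⟨v, hv0, hvM⟩ := Matrix.exists_mulVec_eq_zero_iff.mpr hdet
    have row0 : X1 (1/2) 0 * v 0 + X2 (1/2) 0 * v 1 + X3 (1/2) 0 * v 2 = 0 := by
      have := congrFun hvM 0
      simpa [Matrix.mulVec, dotProduct, Fin.sum_univ_three] using this
    have row1 : X1 (1/2) 2 * v 0 + X2 (1/2) 2 * v 1 + X3 (1/2) 2 * v 2 = 0 := by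
      have := congrFun hvM 1
      simpa [Matrix.mulVec, dotProduct, Fin.sum_univ_three] using this
    have row2 : X1 (1/2) 4 * v 0 + X2 (1/2) 4 * v 1 + X3 (1/2) 4 * v 2 = 0 := by
      have := congrFun hvM 2
      simpa [Matrix.mulVec, dotProduct, Fin.sum_univ_three] using this
    refine ⟨S (v 0) (v 1) (v 2), hS _ _ _, ?_, ?_, ?_, ?_, ?_, ?_, ⟨q, ?_⟩⟩
    · simp [hSdef, hX1i, hX2i, hX3i]
    · simp [hSdef, hX1i, hX2i, hX3i]
    · simp [hSdef, hX1i, hX2i, hX3i]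
    · simp only [hSdef]; linarith
    · simp only [hSdef]; linarith
    · simp only [hSdef]; linarith
    · intro hS0
      apply hv0
      have e2 : v 0 = 0 := by
        have h := congrFun hS0 2
        simp [hSdef, hX1i, hX2i, hX3i, vec6_five, hν0 q, hk0] at h
        exact h
      have e3 : v 1 = 0 := by
        have h := congrFun hS0 3
        simp [hSdef, hX1i, hX2i, hX3i, vec6_five, e2, hν0 q, hk0] at h
        exact h
      have e5 : v 2 = 0 := by
        have h := congrFun hS0 5
        simp [hSdef, hX1i, hX2i, hX3i, vec6_five, e2, e3, hν0 q, hk0] at h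
        exact h
      ext j
      fin_cases j
      · exact e2
      · exact e3
      · exact e5
end
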